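/- Let G₁, ..., G_n be non-trivial finite groups, H_n = G₁ × ... × G_n with word metric induced by the generators ∪_i ({1}×...×Σ_i×...×{1}) where Σ_i generates G_i. If A ⊆ H_n is contained in a ball B(1,M) with n > 3M + 2, then |halo(A)| ≥ |A|, where halo(A) is the set of points not in A whose 2-ball intersects A. -/

import Mathlib

/-!
Double counting. Fix in each factor a generator `s i ≠ 1`. A point `a ∈ A` has word length
`< M`, hence fewer than `M` non-trivial coordinates and at least `n - M + 1 ≥ 2M` trivial ones;
switching any one of those to `s i` gives `2M` distinct points of `A ∪ halo(A)`. Conversely a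
point `x` of word length `≤ M` arises in this way from at most `M` points, obtained by resetting
one of its non-trivial coordinates to `1`. Hence `2M |A| ≤ M |A ∪ halo(A)| ≤ M (|A| + |halo(A)|)`.
-/

/-- The word length of `g` with respect to a generating set `S` (and its inverses). -/
noncomputable def wordLength {G : Type*} [Group G] (S : Set G) (g : G) : ℕ :=
  sInf {k : ℕ | ∃ l : List G, l.length = k ∧ (∀ s ∈ l, s ∈ S ∨ s⁻¹ ∈ S) ∧ l.prod = g}

open Finset Function

section WordLength

variable {G : Type*} [Group G] {S : Set G}

lemma wordLength_one : wordLength S (1 : G) = 0 :=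
  Nat.sInf_eq_zero.mpr (Or.inl ⟨[], rfl, by simp, rfl⟩)

lemma wordLength_le_one {g : G} (h : g ∈ S ∨ g⁻¹ ∈ S) : wordLength S g ≤ 1 :=
  Nat.sInf_le ⟨[g], rfl, by simpa using h, by simp⟩

lemma exists_word_of_closure_eq_top (hgen : Subgroup.closure S = ⊤) (g : G) :
    ∃ l : List G, (∀ s ∈ l, s ∈ S ∨ s⁻¹ ∈ S) ∧ l.prod = g := by
  have hg : g ∈ (Subgroup.closure S).toSubmonoid := by simp [hgen]
  rw [Subgroup.closure_toSubmonoid] at hg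
  obtain ⟨l, hl, rfl⟩ := Submonoid.exists_list_of_mem_closure hg
  exact ⟨l, fun s hs => (hl s hs).imp id (by simpa using ·), rfl⟩

lemma wordLength_pos (hgen : Subgroup.closure S = ⊤) {g : G} (hg : g ≠ 1) :
    0 < wordLength S g := by
  refine Nat.pos_of_ne_zero fun h => ?_
  rcases Nat.sInf_eq_zero.mp h with ⟨l, hl, -, rfl⟩ | hempty
  · exact hg (by simp [List.length_eq_zero_iff.mp hl])
  · obtain ⟨l, hl⟩ := exists_word_of_closure_eq_top hgen g
    exact hempty.subset ⟨l, rfl, hl⟩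

lemma exists_mem_ne_one_of_closure_eq_top [Nontrivial G] (hgen : Subgroup.closure S = ⊤) :
    ∃ s ∈ S, s ≠ 1 := by
  by_contra! h
  exact top_ne_bot (hgen ▸ Subgroup.closure_eq_bot_iff.mpr h)

end WordLength

section Update

variable {ι : Type*} [DecidableEq ι] {G : ι → Type*} [∀ i, Group (G i)] {a : ∀ i, G i} {i : ι}

lemma update_inv_mul_self (ha : a i = 1) (g : G i) :
    (update a i g)⁻¹ * a = Pi.mulSingle i g⁻¹ := by
  ext j
  rcases eq_or_ne j i with rfl | hj
  · simp [ha]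
  · simp [hj]

lemma update_update_one (ha : a i = 1) (g : G i) : update (update a i g) i 1 = a := by
  rw [update_idem, ← ha, update_eq_self]

variable (s : ∀ i, G i)

def IsStep (a x : ∀ i, G i) : Prop := ∃ i, a i = 1 ∧ update a i (s i) = x

variable {s} [Fintype ι] [∀ i, DecidableEq (G i)] [DecidableRel (IsStep s)]

lemma card_eq_one_le_card_bipartiteAbove (hs : ∀ i, s i ≠ 1) {t : Finset (∀ i, G i)}
    (ht : ∀ i, a i = 1 → update a i (s i) ∈ t) :
    #{i | a i = 1} ≤ #(t.bipartiteAbove (IsStep s) a) := by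
  refine card_le_card_of_injOn (fun i => update a i (s i)) (fun i hi => ?_) ?_
  · have hi : a i = 1 := (mem_filter.mp hi).2
    exact (mem_bipartiteAbove _).mpr ⟨ht i hi, i, hi, rfl⟩
  · intro i hi j _ hij
    by_contra hne
    have := congrFun hij i
    simp only [update_self, update_of_ne hne] at this
    exact hs i (this.trans (mem_filter.mp hi).2)

lemma card_bipartiteBelow_le_card_ne_one (hs : ∀ i, s i ≠ 1) (t : Finset (∀ i, G i))
    (x : ∀ i, G i) : #(t.bipartiteBelow (IsStep s) x) ≤ #{j | x j ≠ 1} := by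
  refine (card_le_card fun b hb => ?_).trans (card_image_le (f := (update x · 1)))
  obtain ⟨-, j, hbj, rfl⟩ := (mem_bipartiteBelow _).mp hb
  exact mem_image.mpr ⟨j, by simpa using hs j, update_update_one hbj _⟩

end Update

section Product

variable {ι : Type*} [Fintype ι] {G : ι → Type*} [∀ i, Group (G i)] (S : ∀ i, Set (G i))

noncomputable def piWordLength (x : ∀ i, G i) : ℕ := ∑ i, wordLength (S i) (x i)

def halo (A : Set (∀ i, G i)) : Set (∀ i, G i) :=
  {x | x ∉ A ∧ ∃ a ∈ A, piWordLength S (x⁻¹ * a) < 2}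

variable {S}

lemma card_ne_one_le_piWordLength [∀ i, DecidableEq (G i)]
    (hgen : ∀ i, Subgroup.closure (S i) = ⊤) (x : ∀ i, G i) :
    #{i | x i ≠ 1} ≤ piWordLength S x :=
  calc #{i | x i ≠ 1} = ∑ i with x i ≠ 1, 1 := by simp
    _ ≤ ∑ i with x i ≠ 1, wordLength (S i) (x i) :=
      sum_le_sum fun i hi => wordLength_pos (hgen i) (mem_filter.mp hi).2
    _ ≤ piWordLength S x := sum_le_sum_of_subset (subset_univ _)

lemma card_le_card_eq_one_add_piWordLength [∀ i, DecidableEq (G i)]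
    (hgen : ∀ i, Subgroup.closure (S i) = ⊤) (x : ∀ i, G i) :
    Fintype.card ι ≤ #{i | x i = 1} + piWordLength S x := by
  rw [← card_univ, ← card_filter_add_card_filter_not (x · = 1)]
  exact Nat.add_le_add_left (card_ne_one_le_piWordLength hgen x) _

variable [DecidableEq ι]

lemma piWordLength_mulSingle (i : ι) (g : G i) :
    piWordLength S (Pi.mulSingle i g) = wordLength (S i) g := by
  rw [piWordLength, Fintype.sum_eq_single i fun j hj => by simp [hj, wordLength_one]]
  simp

lemma piWordLength_update {a : ∀ i, G i} {i : ι} (ha : a i = 1) (g : G i) :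
    piWordLength S (update a i g) = piWordLength S a + wordLength (S i) g := by
  rw [← piWordLength_mulSingle, piWordLength, piWordLength, piWordLength, ← sum_add_distrib]
  refine Fintype.sum_congr _ _ fun j => ?_
  rcases eq_or_ne j i with rfl | hj
  · simp [ha, wordLength_one]
  · simp [hj, wordLength_one]

lemma update_mem_union_halo {A : Set (∀ i, G i)} {a : ∀ i, G i} (haA : a ∈ A) {i : ι}
    (ha : a i = 1) {g : G i} (hg : g ∈ S i) : update a i g ∈ A ∪ halo S A := by
  by_cases hA : update a i g ∈ A
  · exact Or.inl hA
  refine Or.inr ⟨hA, a, haA, ?_⟩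
  rw [update_inv_mul_self ha, piWordLength_mulSingle]
  exact Nat.lt_succ_of_le (wordLength_le_one (Or.inr (by simpa using hg)))

theorem ncard_le_ncard_halo [∀ i, Finite (G i)] [∀ i, Nontrivial (G i)]
    (hgen : ∀ i, Subgroup.closure (S i) = ⊤) {M : ℕ} (hM : 3 * M ≤ Fintype.card ι + 1)
    {A : Set (∀ i, G i)} (hA : ∀ x ∈ A, piWordLength S x < M) :
    A.ncard ≤ (halo S A).ncard := by
  classical
  have := Fintype.ofFinite (∀ i, G i)
  choose s hsS hs1 using fun i => exists_mem_ne_one_of_closure_eq_top (hgen i)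
  have hlow : ∀ a ∈ A.toFinset,
      2 * M ≤ #((A ∪ halo S A).toFinset.bipartiteAbove (IsStep s) a) := by
    intro a ha
    rw [Set.mem_toFinset] at ha
    have := card_le_card_eq_one_add_piWordLength hgen a
    have := hA a ha
    refine le_trans (by omega) (card_eq_one_le_card_bipartiteAbove hs1 fun i hi => ?_)
    exact Set.mem_toFinset.mpr (update_mem_union_halo ha hi (hsS i))
  have hup : ∀ x ∈ (A ∪ halo S A).toFinset, #(A.toFinset.bipartiteBelow (IsStep s) x) ≤ M := by
    intro x _
    obtain h | ⟨a, ha⟩ := (A.toFinset.bipartiteBelow (IsStep s) x).eq_empty_or_nonempty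
    · simp [h]
    obtain ⟨haA, i, hai, rfl⟩ := (mem_bipartiteBelow _).mp ha
    refine (card_bipartiteBelow_le_card_ne_one hs1 _ _).trans <|
      (card_ne_one_le_piWordLength hgen _).trans ?_
    rw [piWordLength_update hai]
    have := wordLength_le_one (Or.inl (hsS i))
    have := hA a (Set.mem_toFinset.mp haA)
    omega
  have hcount := card_mul_le_card_mul _ hlow hup
  rw [← Set.ncard_eq_toFinset_card', ← Set.ncard_eq_toFinset_card'] at hcount
  have hT := Set.ncard_union_le A (halo S A)
  rcases A.eq_empty_or_nonempty with rfl | ⟨a, ha⟩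
  · simp
  have hMpos : 0 < M := (Nat.zero_le _).trans_lt (hA a ha)
  have := hcount.trans (Nat.mul_le_mul_right M hT)
  exact Nat.le_of_mul_le_mul_right (by linarith) hMpos

end Product

theorem stmt_19 {n : ℕ} (G : Fin n → Type*) [∀ i, Group (G i)] [∀ i, Fintype (G i)]
    [∀ i, Nontrivial (G i)] (S : ∀ i, Set (G i))
    (hgen : ∀ i, Subgroup.closure (S i) = ⊤)
    (M : ℕ) (hn : 3 * M + 2 < n)
    (A : Set (∀ i, G i))
    (hA : ∀ x ∈ A, (∑ i, wordLength (S i) (x i)) < M) :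
    A.ncard ≤
      {x : ∀ i, G i | x ∉ A ∧ ∃ a ∈ A,
        (∑ i, wordLength (S i) ((x i)⁻¹ * a i)) < 2}.ncard := by
  exact ncard_le_ncard_halo hgen (by rw [Fintype.card_fin]; omega) hA
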